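/- arXiv:math/0002073 — 5 statements merged into one kernel-verified Lean document; each statement's English description precedes it below -/
import Mathlib

section
/- The number of compositions of n with no component equal to 2 satisfies the recurrence π_n = π_{n-1} + π_{n-2} + π_{n-4} for n ≥ 5, with initial conditions π_1 = 1, π_2 = 1, π_3 = 2, π_4 = 4. -/
open scoped Classical

/-- `piNo2 n` is the number of compositions of `n` having no part equal to `2`. -/
noncomputable def piNo2 (n : ℕ) : ℕ :=
  (Finset.univ.filter (fun c : Composition n => 2 ∉ c.blocks)).card

/-- Lists of positive parts, none equal to `2`, summing to `n`. -/
def Tlist (n : ℕ) : Type := {l : List ℕ // l.sum = n ∧ ∀ i ∈ l, 0 < i ∧ i ≠ 2}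

def compEquiv (n : ℕ) : {c : Composition n // 2 ∉ c.blocks} ≃ Tlist n where
  toFun c := ⟨c.1.blocks, c.1.blocks_sum,
    fun i h => ⟨c.1.blocks_pos h, fun h2 => c.2 (h2 ▸ h)⟩⟩
  invFun l := ⟨⟨l.1, fun h => (l.2.2 _ h).1, l.2.1⟩, fun h => ((l.2.2 2 h).2 rfl)⟩
  left_inv c := rfl
  right_inv l := rfl

noncomputable instance (n : ℕ) : Fintype (Tlist n) :=
  Fintype.ofEquiv _ (compEquiv n)

lemma piNo2_eq (n : ℕ) : piNo2 n = Fintype.card (Tlist n) := by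
  rw [← Fintype.card_congr (compEquiv n)]
  simp [piNo2, Fintype.card_subtype]

lemma piNo2_zero : piNo2 0 = 1 := by
  rw [piNo2_eq, Fintype.card_eq_one_iff]
  refine ⟨⟨[], by simp⟩, ?_⟩
  rintro ⟨l, hs, hp⟩
  have : l = [] := by
    cases l with
    | nil => rfl
    | cons a t =>
      exfalso
      have := (hp a (by simp)).1
      simp at hs; omega
  subst this; rfl

def headEquiv (n : ℕ) (hn : 1 ≤ n) :
    Tlist n ≃ Σ k : ((Finset.Icc 1 n).filter (fun k => k ≠ 2)), Tlist (n - (k : ℕ)) where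
  toFun l :=
    match l with
    | ⟨[], hs, _⟩ => absurd hs (by simp; omega)
    | ⟨a :: t, hs, hp⟩ =>
      ⟨⟨a, by
        simp only [Finset.mem_filter, Finset.mem_Icc]
        have h1 := hp a (by simp)
        simp only [List.sum_cons] at hs
        exact ⟨⟨h1.1, by omega⟩, h1.2⟩⟩,
       ⟨t, by show t.sum = n - a; simp only [List.sum_cons] at hs; omega,
        fun i h => hp i (by simp [h])⟩⟩
  invFun p := ⟨(p.1 : ℕ) :: p.2.1, by
      have hk := p.1.2
      simp only [Finset.mem_filter, Finset.mem_Icc] at hk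
      have := p.2.2.1
      simp only [List.sum_cons]
      omega,
    by
      intro i hi
      rcases List.mem_cons.1 hi with h | h
      · subst h
        have hk := p.1.2
        simp only [Finset.mem_filter, Finset.mem_Icc] at hk
        exact ⟨by omega, hk.2⟩
      · exact p.2.2.2 i h⟩
  left_inv l := by
    match l with
    | ⟨[], hs, _⟩ => exact absurd hs (by simp; omega)
    | ⟨a :: t, hs, hp⟩ => rfl
  right_inv p := by
    rcases p with ⟨⟨k, hk⟩, ⟨t, ht⟩⟩
    rfl

lemma head_split (n : ℕ) (hn : 1 ≤ n) :
    piNo2 n = piNo2 (n - 1) + ∑ k ∈ Finset.Icc 3 n, piNo2 (n - k) := by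
  rw [piNo2_eq, Fintype.card_congr (headEquiv n hn), Fintype.card_sigma]
  have h1 : ∀ k : ((Finset.Icc 1 n).filter (fun k => k ≠ 2)),
      Fintype.card (Tlist (n - (k : ℕ))) = piNo2 (n - (k : ℕ)) :=
    fun k => (piNo2_eq _).symm
  simp_rw [h1]
  rw [Finset.sum_coe_sort _ (fun k => piNo2 (n - k))]
  have h2 : (Finset.Icc 1 n).filter (fun k => k ≠ 2) = insert 1 (Finset.Icc 3 n) := by
    ext k
    simp only [Finset.mem_filter, Finset.mem_Icc, Finset.mem_insert]
    omega
  rw [h2, Finset.sum_insert (by simp)]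

lemma rec1 (n : ℕ) (hn : 4 ≤ n) :
    piNo2 n + piNo2 (n - 2) = 2 * piNo2 (n - 1) + piNo2 (n - 3) := by
  have H1 := head_split n (by omega)
  have H2 := head_split (n - 1) (by omega)
  have h3 : Finset.Icc 3 n = insert 3 (Finset.Icc 4 n) := by
    ext k; simp only [Finset.mem_Icc, Finset.mem_insert]; omega
  rw [h3, Finset.sum_insert (by simp)] at H1
  have h4 : ∑ k ∈ Finset.Icc 4 n, piNo2 (n - k)
      = ∑ k ∈ Finset.Icc 3 (n - 1), piNo2 (n - 1 - k) := by
    rw [show Finset.Icc 4 n = Finset.map (addLeftEmbedding 1) (Finset.Icc 3 (n - 1)) by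
      rw [Finset.map_add_left_Icc]; congr 1 <;> omega]
    rw [Finset.sum_map]
    refine Finset.sum_congr rfl fun k hk => ?_
    simp only [addLeftEmbedding_apply]
    congr 1
    omega
  rw [show n - 1 - 1 = n - 2 by omega] at H2
  omega

lemma piNo2_one : piNo2 1 = 1 := by
  have := head_split 1 (by omega)
  simp [piNo2_zero, show Finset.Icc 3 1 = ∅ by decide] at this
  simpa using this

lemma piNo2_two : piNo2 2 = 1 := by
  have := head_split 2 (by omega)
  simp [piNo2_one, show Finset.Icc 3 2 = ∅ by decide] at this
  simpa using this

lemma piNo2_three : piNo2 3 = 2 := by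
  have := head_split 3 (by omega)
  rw [show Finset.Icc 3 3 = {3} by decide] at this
  simp [piNo2_two, piNo2_zero] at this
  simpa using this

lemma piNo2_four : piNo2 4 = 4 := by
  have := head_split 4 (by omega)
  rw [show Finset.Icc 3 4 = {3, 4} by decide] at this
  simp [piNo2_three, piNo2_one, piNo2_zero, Finset.sum_insert, Finset.sum_singleton] at this
  simpa using this

/-- The number of compositions of `n` with no component equal to `2` satisfies
`π_n = π_{n-1} + π_{n-2} + π_{n-4}` for `n ≥ 5`, with `π_1 = 1`, `π_2 = 1`, `π_3 = 2`, `π_4 = 4`. -/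
theorem stmt0 :
    piNo2 1 = 1 ∧ piNo2 2 = 1 ∧ piNo2 3 = 2 ∧ piNo2 4 = 4 ∧
    ∀ n : ℕ, 5 ≤ n → piNo2 n = piNo2 (n - 1) + piNo2 (n - 2) + piNo2 (n - 4) := by
  refine ⟨piNo2_one, piNo2_two, piNo2_three, piNo2_four, fun n hn => ?_⟩
  have A := rec1 n (by omega)
  have B := rec1 (n - 1) (by omega)
  rw [show n - 1 - 1 = n - 2 by omega, show n - 1 - 2 = n - 3 by omega,
    show n - 1 - 3 = n - 4 by omega] at B
  omega
end

section
/- With ψ defined on monomial quasi-symmetric functions by ψ(M_β) = M_{β⁺} + 2M_{β·1}, the peak functions satisfy ψ(θ_α) = θ_{α⁺} for every peak composition α. -/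
/-!
Every composition of `m + 1` is uniquely `β⁺` or `β·1` with `β ⊨ m` (according as its last part
exceeds `1` or equals `1`), and `k(β⁺) = k(β)`, `k(β·1) = k(β) + 1`. So `θ_{α⁺}` splits into two
sums over `β ⊨ m`, and it remains to see that both conditions `(β⁺)* ≼ α⁺` and `(β·1)* ≼ α⁺` are
equivalent to `β* ≼ α`. Now `(β·1)* = β*·1`, and `(β⁺)*` is `(β*)⁺` or, when `β` ends in a part
`1` that is not its first, `β*·1`; and for `γ ≠ []` and `α` with positive last part, each of
`γ⁺ ≼ α⁺` and `γ·1 ≼ α⁺` is equivalent to `γ ≼ α`, by looking at the last block of the refinement.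
-/

open scoped Classical

noncomputable section

/-- The monomial quasi-symmetric function `M_α`. -/
def Mqs (α : List ℕ) : MvPowerSeries ℕ ℚ :=
  fun d => if (d.support.sort (· ≤ ·)).map (fun i => d i) = α then 1 else 0

/-- `RefinesL fine coarse` : the composition `fine` refines `coarse`. -/
def RefinesL (fine coarse : List ℕ) : Prop :=
  ∃ L : List (List ℕ), [] ∉ L ∧ L.map List.sum = coarse ∧ L.flatten = fine

/-- `β*`: replace every part `β_i > 1` of `β` other than the first by the pair `(1, β_i − 1)`. -/
def starC : List ℕ → List ℕ
  | [] => []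
  | a :: rest => a :: rest.flatMap (fun b => if 1 < b then [1, b - 1] else [b])

/-- The shifted quasi-symmetric function `θ_α = ∑_{β ⊨ m, β* ≼ α} 2^{k(β)} M_β`. -/
def θqs (α : List ℕ) : MvPowerSeries ℕ ℚ :=
  ∑ β : Composition α.sum,
    if RefinesL (starC β.blocks) α then ((2 : ℚ) ^ β.length) • Mqs β.blocks else 0

/-- `β⁺`: increase the last part of `β` by `1`. -/
def plusOne (β : List ℕ) : List ℕ := β.dropLast ++ [β.getLast! + 1]

theorem plusOne_append_singleton (l : List ℕ) (a : ℕ) : plusOne (l ++ [a]) = l ++ [a + 1] := by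
  simp [plusOne, List.getLast!_eq_getLast?_getD]

-- No nonemptiness hypothesis: `plusOne [] = [1]`, as `[].getLast! = 0`.
theorem sum_plusOne (l : List ℕ) : (plusOne l).sum = l.sum + 1 := by
  rcases l.eq_nil_or_concat' with rfl | ⟨l, a, rfl⟩
  · rfl
  · simp [plusOne_append_singleton, Nat.add_assoc]

theorem length_plusOne {l : List ℕ} (hl : l ≠ []) : (plusOne l).length = l.length := by
  obtain ⟨l, a, rfl⟩ := l.eq_nil_or_concat'.resolve_left hl
  simp [plusOne_append_singleton]

theorem refinesL_append_singleton_iff {f c : List ℕ} {y : ℕ} :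
    RefinesL f (c ++ [y]) ↔ ∃ g h, h ≠ [] ∧ RefinesL g c ∧ h.sum = y ∧ f = g ++ h := by
  constructor
  · rintro ⟨L, hL, hsum, rfl⟩
    obtain ⟨L, h, rfl⟩ := L.eq_nil_or_concat'.resolve_left (by rintro rfl; simp at hsum)
    simp only [List.mem_append, List.mem_singleton, not_or, List.map_append, List.map_cons,
      List.map_nil] at hL hsum
    obtain ⟨hc, rfl⟩ : L.map List.sum = c ∧ h.sum = y := by simpa using hsum
    exact ⟨L.flatten, h, Ne.symm hL.2, ⟨L, hL.1, hc, rfl⟩, rfl, by simp⟩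
  · rintro ⟨g, h, hh, ⟨L, hL, rfl, rfl⟩, rfl, rfl⟩
    exact ⟨L ++ [h], by simp [hL, Ne.symm hh], by simp, by simp⟩

theorem refinesL_append_singleton_append_singleton_iff {f c : List ℕ} {x y : ℕ} :
    RefinesL (f ++ [x]) (c ++ [y]) ↔ ∃ g h, RefinesL g c ∧ h.sum + x = y ∧ f = g ++ h := by
  rw [refinesL_append_singleton_iff]
  constructor
  · rintro ⟨g, h, hh, hg, rfl, he⟩
    obtain ⟨h, z, rfl⟩ := h.eq_nil_or_concat'.resolve_left hh
    obtain ⟨rfl, rfl⟩ : f = g ++ h ∧ x = z := by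
      simpa using List.append_inj' (he.trans (List.append_assoc g h [z]).symm) rfl
    exact ⟨g, h, hg, by simp, rfl⟩
  · rintro ⟨g, h, hg, rfl, rfl⟩
    exact ⟨g, h ++ [x], by simp, hg, by simp, by simp⟩

theorem refinesL_plusOne_iff {f c : List ℕ} {y : ℕ} (hf : f ≠ []) :
    RefinesL (plusOne f) (c ++ [y + 1]) ↔ RefinesL f (c ++ [y]) := by
  obtain ⟨f, x, rfl⟩ := f.eq_nil_or_concat'.resolve_left hf
  simp only [plusOne_append_singleton, refinesL_append_singleton_append_singleton_iff,
    ← Nat.add_assoc, Nat.add_right_cancel_iff]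

theorem refinesL_append_one_iff {f c : List ℕ} {y : ℕ} (hy : 0 < y) :
    RefinesL (f ++ [1]) (c ++ [y + 1]) ↔ RefinesL f (c ++ [y]) := by
  rw [refinesL_append_singleton_append_singleton_iff, refinesL_append_singleton_iff]
  refine exists₂_congr fun g h => ⟨fun ⟨hg, hs, he⟩ => ⟨?_, hg, by omega, he⟩,
    fun ⟨_, hg, hs, he⟩ => ⟨hg, by omega, he⟩⟩
  rintro rfl
  simp only [List.sum_nil] at hs
  omega

theorem starC_ne_nil {l : List ℕ} (hl : l ≠ []) : starC l ≠ [] := by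
  cases l with
  | nil => exact absurd rfl hl
  | cons a r => simp [starC]

theorem starC_append_singleton {l : List ℕ} (hl : l ≠ []) (k : ℕ) :
    starC (l ++ [k]) = starC l ++ if 1 < k then [1, k - 1] else [k] := by
  cases l with
  | nil => exact absurd rfl hl
  | cons a r => simp [starC]

theorem starC_plusOne_eq_or {b : List ℕ} (hb : b ≠ []) :
    starC (plusOne b) = plusOne (starC b) ∨ starC (plusOne b) = starC b ++ [1] := by
  obtain ⟨l, k, rfl⟩ := b.eq_nil_or_concat'.resolve_left hb
  rw [plusOne_append_singleton]
  rcases eq_or_ne l [] with rfl | hl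
  · left; rfl
  rw [starC_append_singleton hl, starC_append_singleton hl]
  rcases k with _ | _ | k
  · left; simp [plusOne_append_singleton]
  · right; simp
  · left
    rw [if_pos (by omega), if_pos (by omega), show [1, k + 1 + 1 - 1] = [1] ++ [k + 1] from rfl,
      ← List.append_assoc, plusOne_append_singleton]
    simp

theorem refinesL_starC_plusOne_iff {b c : List ℕ} {y : ℕ} (hb : b ≠ []) (hy : 0 < y) :
    RefinesL (starC (plusOne b)) (c ++ [y + 1]) ↔ RefinesL (starC b) (c ++ [y]) := by
  rcases starC_plusOne_eq_or hb with h | h <;> rw [h]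
  · exact refinesL_plusOne_iff (starC_ne_nil hb)
  · exact refinesL_append_one_iff hy

theorem refinesL_starC_append_one_iff {b c : List ℕ} {y : ℕ} (hb : b ≠ []) (hy : 0 < y) :
    RefinesL (starC (b ++ [1])) (c ++ [y + 1]) ↔ RefinesL (starC b) (c ++ [y]) := by
  rw [starC_append_singleton hb, if_neg (lt_irrefl 1)]
  exact refinesL_append_one_iff hy

namespace Composition

variable {n : ℕ}

def addOneToLast (c : Composition n) : Composition (n + 1) where
  blocks := plusOne c.blocks
  blocks_pos {i} hi := by
    rcases List.mem_append.mp hi with hi | hi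
    · exact c.blocks_pos (List.dropLast_subset _ hi)
    · simp only [List.mem_singleton] at hi
      omega
  blocks_sum := by rw [sum_plusOne, c.blocks_sum]

def appendOne (c : Composition n) : Composition (n + 1) :=
  c.append (single 1 Nat.one_pos)

@[simp]
theorem addOneToLast_blocks (c : Composition n) : c.addOneToLast.blocks = plusOne c.blocks := rfl

@[simp]
theorem appendOne_blocks (c : Composition n) : c.appendOne.blocks = c.blocks ++ [1] := rfl

theorem exists_blocks_eq_append_singleton_succ (hn : 0 < n) (c : Composition n) :
    ∃ l a, c.blocks = l ++ [a + 1] := by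
  obtain ⟨l, a, h⟩ := c.blocks.eq_nil_or_concat'.resolve_left (by simpa [blocks_eq_nil] using hn.ne')
  obtain ⟨a, rfl⟩ := Nat.exists_eq_add_one.mpr (c.blocks_pos (h ▸ List.mem_concat_self))
  exact ⟨l, a, h⟩

theorem addOneToLast_injective (hn : 0 < n) : Function.Injective (addOneToLast (n := n)) := by
  intro c c' h
  obtain ⟨l, a, hc⟩ := exists_blocks_eq_append_singleton_succ hn c
  obtain ⟨l', a', hc'⟩ := exists_blocks_eq_append_singleton_succ hn c'
  replace h := congrArg blocks h
  simp only [addOneToLast_blocks, hc, hc', plusOne_append_singleton] at h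
  ext1
  simpa [hc, hc'] using h

theorem appendOne_injective : Function.Injective (appendOne (n := n)) := fun c c' h => by
  ext1
  simpa using congrArg blocks h

theorem addOneToLast_ne_appendOne (hn : 0 < n) (c c' : Composition n) :
    c.addOneToLast ≠ c'.appendOne := fun h => by
  obtain ⟨l, a, hc⟩ := exists_blocks_eq_append_singleton_succ hn c
  simpa [hc, plusOne_append_singleton] using congrArg blocks h

theorem surjective_sumElim_addOneToLast_appendOne :
    Function.Surjective (Sum.elim (addOneToLast (n := n)) appendOne) := by
  intro γ
  obtain ⟨l, k, hγ⟩ := γ.blocks.eq_nil_or_concat'.resolve_left (by simp [blocks_eq_nil])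
  have hpos : ∀ i ∈ l ++ [k], 0 < i := hγ ▸ fun _ => γ.blocks_pos
  have hsum : l.sum + k = n + 1 := by simpa [hγ] using γ.blocks_sum
  obtain ⟨k, rfl⟩ := Nat.exists_eq_add_one.mpr (hpos k List.mem_concat_self)
  rcases k with _ | k
  · refine ⟨.inr ⟨l, fun hi => hpos _ (List.mem_append_left _ hi), by omega⟩, ?_⟩
    ext1
    simp [hγ]
  · refine ⟨.inl ⟨l ++ [k + 1], fun hi => ?_, ?_⟩, ?_⟩
    · rcases List.mem_append.mp hi with hi | hi
      · exact hpos _ (List.mem_append_left _ hi)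
      · simp only [List.mem_singleton] at hi
        omega
    · simp only [List.sum_append, List.sum_singleton]
      omega
    · ext1
      simp [hγ, plusOne_append_singleton]

theorem bijective_sumElim_addOneToLast_appendOne (hn : 0 < n) :
    Function.Bijective (Sum.elim (addOneToLast (n := n)) appendOne) :=
  ⟨(addOneToLast_injective hn).sumElim appendOne_injective (addOneToLast_ne_appendOne hn),
    surjective_sumElim_addOneToLast_appendOne⟩

end Composition

theorem stmt10_general (α : List ℕ) (hα : α ≠ []) (hp : ∀ p ∈ α, 0 < p) :
    (∑ β : Composition α.sum,
      if RefinesL (starC β.blocks) α then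
        ((2 : ℚ) ^ β.length) • (Mqs (plusOne β.blocks) + (2 : ℚ) • Mqs (β.blocks ++ [1]))
      else 0)
      = θqs (plusOne α) := by
  obtain ⟨c, y, rfl⟩ := α.eq_nil_or_concat'.resolve_left hα
  have hy : 0 < y := hp y List.mem_concat_self
  have hn : 0 < (c ++ [y]).sum := by
    simp only [List.sum_append, List.sum_singleton]
    omega
  rw [θqs, sum_plusOne, ← (Composition.bijective_sumElim_addOneToLast_appendOne hn).sum_comp,
    Fintype.sum_sum_type, ← Finset.sum_add_distrib, plusOne_append_singleton]
  refine Finset.sum_congr rfl fun β _ => ?_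
  have hβ : β.blocks ≠ [] := by simpa [Composition.blocks_eq_nil] using hn.ne'
  simp only [Sum.elim_inl, Sum.elim_inr, Composition.addOneToLast_blocks,
    Composition.appendOne_blocks, Composition.length, length_plusOne hβ, List.length_append,
    List.length_singleton, refinesL_starC_plusOne_iff hβ hy, refinesL_starC_append_one_iff hβ hy]
  split_ifs
  · rw [smul_add, pow_succ, mul_smul]
  · simp

/-- With `ψ` defined on monomial quasi-symmetric functions by
`ψ(M_β) = M_{β⁺} + 2 M_{β·1}`, the peak functions satisfy `ψ(θ_α) = θ_{α⁺}` for every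
peak composition `α` (all parts `> 1` except possibly the last).  The left side `ψ(θ_α)`
is written out termwise from `θ_α = ∑_{β* ≼ α} 2^{k(β)} M_β`. -/
theorem stmt10 (α : List ℕ) (hα : α ≠ []) (hp : ∀ p ∈ α, 0 < p)
    (hpeak : ∀ i, i + 1 < α.length → 1 < α.getD i 0) :
    (∑ β : Composition α.sum,
      if RefinesL (starC β.blocks) α then
        ((2 : ℚ) ^ β.length) • (Mqs (plusOne β.blocks) + (2 : ℚ) • Mqs (β.blocks ++ [1]))
      else 0)
      = θqs (plusOne α) :=
  stmt10_general α hα hp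

end
end

section
/- If a family of Pieri operators is symmetric (h̄_a h̄_b = h̄_b h̄_a for all a,b > 0), then for any interval [x,y] of rank r, K_{[x,y]} = Σ_{λ ⊢ r} A^λ m_λ for integers A^λ, i.e. K_{[x,y]} is a symmetric function; here A^λ = ⟨x·h̄_{λ_1}⋯h̄_{λ_ℓ}, y⟩. -/
open scoped Classical

noncomputable section

/-- Apply the word of operators `h̄_{c_1}, h̄_{c_2}, ...` (in this order, as a right action)
to the basis element `x` of `ℤP`. -/
def applyWord {P : Type} [PartialOrder P] (hb : ℕ → Module.End ℤ (P →₀ ℤ))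
    (c : List ℕ) (x : P) : P →₀ ℤ :=
  ((c.reverse.map hb).prod) (Finsupp.single x 1)

theorem applyWord_perm {P : Type} [PartialOrder P] (hb : ℕ → Module.End ℤ (P →₀ ℤ))
    (hsym : ∀ a b : ℕ, 0 < a → 0 < b → hb a * hb b = hb b * hb a)
    (c d : List ℕ) (hcd : List.Perm c d) (hpos : ∀ k ∈ c, 0 < k) (x : P) :
    applyWord hb c x = applyWord hb d x := by
  unfold applyWord
  congr 1
  refine List.Perm.prod_eq' (((c.reverse_perm.trans hcd).trans d.reverse_perm.symm).map hb) ?_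
  rw [List.pairwise_map]
  refine List.pairwise_of_forall_mem_list fun a ha b hb' => ?_
  exact hsym a b (hpos a (List.mem_reverse.mp ha)) (hpos b (List.mem_reverse.mp hb'))

/-- The partition associated to a composition. -/
def Composition.toPartition {n : ℕ} (α : Composition n) : n.Partition :=
  ⟨(α.blocks : Multiset ℕ), fun h => α.blocks_pos (by simpa using h),
    by simpa using α.blocks_sum⟩

/-- If a family of Pieri operators on a graded poset is symmetric
(`h̄_a h̄_b = h̄_b h̄_a` for all `a, b > 0`), then for any interval `[x,y]` of rank `r`,
`K_{[x,y]} = ∑_{α ⊨ r} ⟨x·h̄_{α_1}⋯h̄_{α_ℓ}, y⟩ M_α = ∑_{λ ⊢ r} A^λ m_λ`, where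
`A^λ = ⟨x·h̄_{λ_1}⋯h̄_{λ_ℓ}, y⟩` and `m_λ = ∑_{sort(α)=λ} M_α`; in particular `K_{[x,y]}`
is a symmetric function. -/
theorem stmt15 {P : Type} [PartialOrder P] (rk : P → ℕ)
    (hb : ℕ → Module.End ℤ (P →₀ ℤ))
    (hPieri : ∀ k : ℕ, 0 < k → ∀ x : P, ∀ y ∈ (hb k (Finsupp.single x 1)).support,
      x < y ∧ rk y = rk x + k)
    (hsym : ∀ a b : ℕ, 0 < a → 0 < b → hb a * hb b = hb b * hb a)
    (x y : P) (r : ℕ) (hxy : x ≤ y) (hr : rk y = rk x + r) :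
    (∑ α : Composition r, ((applyWord hb α.blocks x y : ℤ) : ℚ) • Mqs α.blocks)
      = ∑ p : r.Partition,
          ((applyWord hb (p.parts.sort (· ≥ ·)) x y : ℤ) : ℚ) •
            (∑ α : Composition r,
              if (↑α.blocks : Multiset ℕ) = p.parts then Mqs α.blocks else 0) := by
  have hrhs : ∀ p : r.Partition,
      ((applyWord hb (p.parts.sort (· ≥ ·)) x y : ℤ) : ℚ) •
        (∑ α : Composition r,
          if (↑α.blocks : Multiset ℕ) = p.parts then Mqs α.blocks else 0)
      = ∑ α : Composition r,
          if (↑α.blocks : Multiset ℕ) = p.parts then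
            ((applyWord hb (p.parts.sort (· ≥ ·)) x y : ℤ) : ℚ) • Mqs α.blocks else 0 := by
    intro p
    rw [Finset.smul_sum]
    exact Finset.sum_congr rfl fun α _ => by split <;> simp
  simp only [hrhs]
  rw [Finset.sum_comm]
  refine Finset.sum_congr rfl fun α _ => ?_
  rw [Finset.sum_eq_single α.toPartition]
  · have hperm : List.Perm α.blocks (α.toPartition.parts.sort (· ≥ ·)) := by
      rw [← Multiset.coe_eq_coe, Multiset.sort_eq]
      rfl
    have heq : (↑α.blocks : Multiset ℕ) = α.toPartition.parts := rfl
    rw [if_pos heq,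
      applyWord_perm hb hsym α.blocks (α.toPartition.parts.sort (· ≥ ·)) hperm
        (fun k hk => α.blocks_pos hk) x]
  · intro p _ hp
    rw [if_neg]
    intro h
    exact hp (Nat.Partition.ext h.symm)
  · intro h
    exact absurd (Finset.mem_univ _) h

end
end

section
/- Every peak function θ_α (α a peak composition of n) annihilates the ideal I = ⟨X_{2m} : m ≥ 1⟩ of NC, under the pairing in which {M_α} is dual to {S^α = h_{α_1}⋯h_{α_ℓ}}; i.e., θ_α(S^β X_{2m} S^γ) = 0 for all compositions β, γ and all m ≥ 1. -/
open scoped Classical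

noncomputable section

/-- The pairing `θ_α(S^δ)`: the coefficient of `M_δ` in `θ_α = ∑_{β* ≼ α} 2^{k(β)} M_β`,
under the duality in which `{M_α}` is dual to `{S^α}`. -/
def θpair (α δ : List ℕ) : ℤ :=
  if RefinesL (starC δ) α then 2 ^ δ.length else 0

/-- The word contributed by `h_i` to `S`-indices: empty for `h_0 = 1`, else the part `i`. -/
def wd (i : ℕ) : List ℕ := if i = 0 then [] else [i]

/-! A composition refines another iff both have the same sum and its set of partial sums
contains the other's, and the partial sums of `δ*` are those of `δ` together with `p + 1` for
every partial sum `p` strictly between `0` and the total. Write `δᵢ = β · i · (2m − i) · γ`, so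
that `δ₀ = δ₂ₘ = β · 2m · γ`; for `0 < i < 2m` the partial sums of `δᵢ*` are those of `δ₀*` plus
`Σβ + i` and `Σβ + i + 1`. If `θ_α(S^{δ₀}) ≠ 0`, every term survives and the alternating sum is
`2 · 2^(ℓ+1) − 2^(ℓ+2) = 0`, where `ℓ = ℓ(β) + ℓ(γ)`. Otherwise some partial sum `s` of `α` is
not one of `δ₀*`. Since a peak composition has no two consecutive partial sums except at its
very end, only the two terms with `s ∈ {Σβ + i, Σβ + i + 1}` can survive, and they cancel. -/

open Set

def partialSums (l : List ℕ) : Set ℕ := range fun k => (l.take k).sum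

@[simp]
lemma partialSums_nil : partialSums [] = {0} := by
  simp [partialSums]

lemma partialSums_cons (a : ℕ) (l : List ℕ) :
    partialSums (a :: l) = insert 0 ((a + ·) '' partialSums l) := by
  ext s
  simp only [partialSums, mem_insert_iff, mem_image, mem_range]
  constructor
  · rintro ⟨_ | k, rfl⟩
    · simp
    · exact Or.inr ⟨_, ⟨k, rfl⟩, by simp⟩
  · rintro (rfl | ⟨_, ⟨k, rfl⟩, rfl⟩)
    exacts [⟨0, by simp⟩, ⟨k + 1, by simp⟩]

lemma zero_mem_partialSums (l : List ℕ) : 0 ∈ partialSums l := ⟨0, by simp⟩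

lemma sum_mem_partialSums (l : List ℕ) : l.sum ∈ partialSums l := ⟨l.length, by simp⟩

lemma le_sum_of_mem_partialSums {l : List ℕ} {s : ℕ} (hs : s ∈ partialSums l) : s ≤ l.sum := by
  obtain ⟨k, rfl⟩ := hs
  conv_rhs => rw [← l.take_append_drop k, List.sum_append]
  exact Nat.le_add_right _ _

lemma partialSums_append (u v : List ℕ) :
    partialSums (u ++ v) = partialSums u ∪ (u.sum + ·) '' partialSums v := by
  induction u with
  | nil => simp [insert_eq_of_mem (zero_mem_partialSums v)]
  | cons a u ih =>
    simp only [List.cons_append, partialSums_cons, ih, image_union, image_image, insert_union,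
      List.sum_cons, add_assoc]

lemma partialSums_cons_cons (i j : ℕ) (l : List ℕ) :
    partialSums (i :: j :: l) = insert i (partialSums ((i + j) :: l)) := by
  simp only [partialSums_cons, image_insert_eq, image_image, add_zero, add_assoc]
  exact insert_comm _ _ _

lemma partialSums_map_sum_subset (L : List (List ℕ)) :
    partialSums (L.map List.sum) ⊆ partialSums L.flatten := by
  induction L with
  | nil => simp
  | cons x L ih =>
    rw [List.map_cons, List.flatten_cons, partialSums_cons, partialSums_append]
    exact insert_subset (Or.inl (zero_mem_partialSums x))
      (subset_union_of_subset_right (image_mono ih) _)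

lemma eq_nil_of_sum_eq_zero {l : List ℕ} (hl : ∀ p ∈ l, 0 < p) (h : l.sum = 0) : l = [] :=
  List.eq_nil_iff_forall_not_mem.2 fun p hp => (hl p hp).ne' (List.sum_eq_zero_iff.1 h p hp)

lemma RefinesL.sum_eq {fine coarse : List ℕ} (h : RefinesL fine coarse) :
    fine.sum = coarse.sum := by
  obtain ⟨L, -, rfl, rfl⟩ := h
  exact List.sum_flatten

lemma refinesL_iff {fine coarse : List ℕ} (hfine : ∀ p ∈ fine, 0 < p)
    (hcoarse : ∀ p ∈ coarse, 0 < p) :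
    RefinesL fine coarse ↔ fine.sum = coarse.sum ∧ partialSums coarse ⊆ partialSums fine := by
  refine ⟨fun h => ⟨h.sum_eq, ?_⟩, ?_⟩
  · obtain ⟨L, -, rfl, rfl⟩ := h
    exact partialSums_map_sum_subset L
  · induction coarse generalizing fine with
    | nil =>
      rintro ⟨hsum, -⟩
      exact ⟨[], by simp, rfl, (eq_nil_of_sum_eq_zero hfine hsum).symm⟩
    | cons a coarse ih =>
      rintro ⟨hsum, hsub⟩
      have ha : 0 < a := hcoarse a List.mem_cons_self
      obtain ⟨k, hk⟩ : a ∈ partialSums fine := hsub ⟨1, by simp⟩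
      set u := fine.take k
      set v := fine.drop k
      have hfine_eq : fine = u ++ v := (fine.take_append_drop k).symm
      have hk : u.sum = a := hk
      have hu : u ≠ [] := by rintro h; simp [h] at hk; omega
      have hv : ∀ p ∈ v, 0 < p := fun p hp => hfine p (List.mem_of_mem_drop hp)
      have hvsum : v.sum = coarse.sum := by
        rw [hfine_eq, List.sum_append, hk, List.sum_cons] at hsum; omega
      have hvsub : partialSums coarse ⊆ partialSums v := by
        intro s hs
        have : a + s ∈ partialSums fine :=
          hsub (by rw [partialSums_cons]; exact Or.inr ⟨s, hs, rfl⟩)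
        rw [hfine_eq, partialSums_append, hk] at this
        rcases this with h | ⟨t, ht, hts⟩
        · have hs0 : s = 0 := by have := le_sum_of_mem_partialSums h; omega
          exact hs0 ▸ zero_mem_partialSums v
        · simp only [add_right_inj] at hts; exact hts ▸ ht
      obtain ⟨L, hL, hLsum, hLv⟩ := ih hv (fun p hp => hcoarse p (List.mem_cons_of_mem a hp))
        ⟨hvsum, hvsub⟩
      refine ⟨u :: L, ?_, ?_, ?_⟩
      · simp [hL, Ne.symm hu]
      · simp [hLsum, hk]
      · simp [hLv, ← hfine_eq]

lemma add_one_eq_sum_of_mem_partialSums {α : List ℕ} (hα : ∀ p ∈ α, 0 < p)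
    (hpeak : ∀ i, i + 1 < α.length → 1 < α.getD i 0) {s : ℕ}
    (hs : s ∈ partialSums α) (hs1 : s + 1 ∈ partialSums α) : s + 1 = α.sum := by
  induction α generalizing s with
  | nil => simp at hs1
  | cons a t ih =>
    rw [partialSums_cons] at hs hs1
    obtain ⟨t₁, ht₁, hst₁ : a + t₁ = s + 1⟩ := hs1.resolve_left (Nat.succ_ne_zero s)
    rcases hs with rfl | ⟨t₀, ht₀, rfl : a + t₀ = s⟩
    · have ha : 0 < a := hα a List.mem_cons_self
      have ht : t = [] := by
        by_contra h
        have := hpeak 0 (by simpa [List.length_pos_iff] using h)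
        simp at this; omega
      simp [ht] at ht₁ ⊢; omega
    · have := ih (fun p hp => hα p (List.mem_cons_of_mem a hp))
        (fun i hi => by simpa using hpeak (i + 1) (by simpa using hi)) ht₀
        (by rwa [show t₀ + 1 = t₁ by omega])
      simp; omega

lemma partialSums_subset_insert_insert_iff {α : List ℕ} (hα : ∀ p ∈ α, 0 < p)
    (hpeak : ∀ i, i + 1 < α.length → 1 < α.getD i 0) {Q : Set ℕ} {s₀ : ℕ}
    (hs₀ : s₀ ∈ partialSums α) (hs₀Q : s₀ ∉ Q) (hsumQ : α.sum ∈ Q) (s : ℕ) :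
    partialSums α ⊆ insert s (insert (s + 1) Q) ↔
      (s₀ = s ∨ s₀ = s + 1) ∧ partialSums α ⊆ insert s₀ Q := by
  constructor
  · intro h
    have hs : s₀ = s ∨ s₀ = s + 1 := by
      rcases h hs₀ with h | h | h
      exacts [Or.inl h, Or.inr h, absurd h hs₀Q]
    refine ⟨hs, fun t ht => ?_⟩
    rcases h ht with rfl | rfl | htQ
    · rcases hs with rfl | rfl
      · exact Or.inl rfl
      · exact absurd (add_one_eq_sum_of_mem_partialSums hα hpeak ht hs₀ ▸ hsumQ) hs₀Q
    · rcases hs with rfl | rfl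
      · exact Or.inr (add_one_eq_sum_of_mem_partialSums hα hpeak hs₀ ht ▸ hsumQ)
      · exact Or.inl rfl
    · exact Or.inr htQ
  · rintro ⟨hs, h⟩ t ht
    rcases h ht with rfl | htQ
    · rcases hs with rfl | rfl <;> simp
    · exact Or.inr (Or.inr htQ)

lemma sum_split (b : ℕ) : (if 1 < b then [1, b - 1] else [b]).sum = b := by
  split_ifs <;> simp; omega

lemma partialSums_split {b : ℕ} (hb : 0 < b) :
    partialSums (if 1 < b then [1, b - 1] else [b]) = {0, 1, b} := by
  split_ifs with h
  · simp [partialSums_cons, image_insert_eq, show 1 + (b - 1) = b by omega]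
  · simp [partialSums_cons, show b = 1 by omega]

lemma partialSums_flatMap_split {l : List ℕ} (hl : ∀ p ∈ l, 0 < p) :
    partialSums (l.flatMap fun b => if 1 < b then [1, b - 1] else [b]) =
      partialSums l ∪ (· + 1) '' (partialSums l ∩ Iio l.sum) := by
  induction l with
  | nil => simp
  | cons a t ih =>
    have ha : 0 < a := hl a List.mem_cons_self
    rw [List.flatMap_cons, partialSums_append, ih fun p hp => hl p (List.mem_cons_of_mem a hp),
      partialSums_split ha, partialSums_cons, sum_split]
    ext s
    simp only [mem_union, mem_insert_iff, mem_singleton_iff, mem_image, mem_inter_iff, mem_Iio,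
      List.sum_cons]
    constructor
    · rintro ((rfl | rfl | rfl) | ⟨x, hx | ⟨y, ⟨hy, hyt⟩, rfl⟩, rfl⟩)
      · exact Or.inl (Or.inl rfl)
      · exact Or.inr ⟨0, ⟨Or.inl rfl, by omega⟩, rfl⟩
      · exact Or.inl (Or.inr ⟨0, zero_mem_partialSums t, by simp⟩)
      · exact Or.inl (Or.inr ⟨x, hx, rfl⟩)
      · exact Or.inr ⟨a + y, ⟨Or.inr ⟨y, hy, rfl⟩, by omega⟩, by omega⟩
    · rintro ((rfl | ⟨x, hx, rfl⟩) | ⟨y, ⟨rfl | ⟨x, hx, rfl⟩, hyt⟩, rfl⟩)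
      · exact Or.inl (Or.inl rfl)
      · exact Or.inr ⟨x, Or.inl hx, rfl⟩
      · exact Or.inl (Or.inr (Or.inl rfl))
      · exact Or.inr ⟨x + 1, Or.inr ⟨x, ⟨hx, by omega⟩, rfl⟩, by omega⟩

lemma starC_sum (l : List ℕ) : (starC l).sum = l.sum := by
  cases l with
  | nil => rfl
  | cons a t => simp [starC, List.flatMap, List.sum_flatten, Function.comp_def, sum_split]

lemma starC_pos {l : List ℕ} (hl : ∀ p ∈ l, 0 < p) : ∀ p ∈ starC l, 0 < p := by
  cases l with
  | nil => simp [starC]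
  | cons a t =>
    simp only [starC, List.mem_cons, List.mem_flatMap]
    rintro p (rfl | ⟨b, hb, hpb⟩)
    · exact hl p List.mem_cons_self
    · have := hl b (List.mem_cons_of_mem a hb)
      split_ifs at hpb <;> simp at hpb <;> omega

lemma partialSums_starC {l : List ℕ} (hl : ∀ p ∈ l, 0 < p) :
    partialSums (starC l) = partialSums l ∪ (· + 1) '' (partialSums l ∩ Ioo 0 l.sum) := by
  cases l with
  | nil => simp [starC]
  | cons a t =>
    have ha : 0 < a := hl a List.mem_cons_self
    rw [starC, partialSums_cons,
      partialSums_flatMap_split fun p hp => hl p (List.mem_cons_of_mem a hp), partialSums_cons]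
    ext s
    simp only [mem_union, mem_insert_iff, mem_image, mem_inter_iff, mem_Iio, mem_Ioo, List.sum_cons]
    constructor
    · rintro (rfl | ⟨x, hx | ⟨y, ⟨hy, hyt⟩, rfl⟩, rfl⟩)
      · exact Or.inl (Or.inl rfl)
      · exact Or.inl (Or.inr ⟨x, hx, rfl⟩)
      · exact Or.inr ⟨a + y, ⟨Or.inr ⟨y, hy, rfl⟩, by omega, by omega⟩, by omega⟩
    · rintro ((rfl | ⟨x, hx, rfl⟩) | ⟨y, ⟨rfl | ⟨x, hx, rfl⟩, hy0, hyt⟩, rfl⟩)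
      · exact Or.inl rfl
      · exact Or.inr ⟨x, Or.inl hx, rfl⟩
      · omega
      · exact Or.inr ⟨x + 1, Or.inr ⟨x, ⟨hx, by omega⟩, rfl⟩, by omega⟩

lemma partialSums_subset_partialSums_starC {l : List ℕ} (hl : ∀ p ∈ l, 0 < p) :
    partialSums l ⊆ partialSums (starC l) := by
  rw [partialSums_starC hl]; exact subset_union_left

lemma θpair_eq_ite {α δ : List ℕ} (hα : ∀ p ∈ α, 0 < p) (hδ : ∀ p ∈ δ, 0 < p) :
    θpair α δ =
      if δ.sum = α.sum ∧ partialSums α ⊆ partialSums (starC δ) then 2 ^ δ.length else 0 := by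
  simp only [θpair, refinesL_iff (starC_pos hδ) hα, starC_sum]

lemma θpair_eq_zero_of_sum_ne {α δ : List ℕ} (h : δ.sum ≠ α.sum) : θpair α δ = 0 :=
  if_neg fun hr => h (starC_sum δ ▸ hr.sum_eq)

lemma partialSums_append_cons_cons (u v : List ℕ) (i j : ℕ) :
    partialSums (u ++ i :: j :: v) = insert (u.sum + i) (partialSums (u ++ (i + j) :: v)) := by
  rw [partialSums_append, partialSums_cons_cons, image_insert_eq, union_insert,
    ← partialSums_append]

lemma partialSums_starC_append_cons_cons {u v : List ℕ} (hu : ∀ p ∈ u, 0 < p)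
    (hv : ∀ p ∈ v, 0 < p) {i j : ℕ} (hi : 0 < i) (hj : 0 < j) :
    partialSums (starC (u ++ i :: j :: v)) =
      insert (u.sum + i) (insert (u.sum + i + 1) (partialSums (starC (u ++ (i + j) :: v)))) := by
  have hl : ∀ p ∈ u ++ i :: j :: v, 0 < p := by
    simp only [List.forall_mem_append, List.forall_mem_cons]; exact ⟨hu, hi, hj, hv⟩
  have hl' : ∀ p ∈ u ++ (i + j) :: v, 0 < p := by
    simp only [List.forall_mem_append, List.forall_mem_cons]; exact ⟨hu, by omega, hv⟩
  rw [partialSums_starC hl, partialSums_starC hl',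
    partialSums_append_cons_cons, insert_inter_of_mem (by simp; omega), image_insert_eq]
  ext s
  simp only [mem_union, mem_insert_iff, mem_image, List.sum_append, List.sum_cons, ← add_assoc]
  tauto

lemma θpair_append_cons_cons {α u v : List ℕ} (hα : ∀ p ∈ α, 0 < p) (hu : ∀ p ∈ u, 0 < p)
    (hv : ∀ p ∈ v, 0 < p) {i n : ℕ} (hi : 0 < i) (hin : i < n) :
    θpair α (u ++ i :: (n - i) :: v) =
      if (u ++ n :: v).sum = α.sum ∧ partialSums α ⊆
          insert (u.sum + i) (insert (u.sum + i + 1) (partialSums (starC (u ++ n :: v))))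
      then 2 ^ (u.length + v.length + 2) else 0 := by
  have hl : ∀ p ∈ u ++ i :: (n - i) :: v, 0 < p := by
    simp only [List.forall_mem_append, List.forall_mem_cons]; exact ⟨hu, hi, by omega, hv⟩
  have hsum : (u ++ i :: (n - i) :: v).sum = (u ++ n :: v).sum := by simp; omega
  have hlen : (u ++ i :: (n - i) :: v).length = u.length + v.length + 2 := by simp; omega
  rw [θpair_eq_ite hα hl, partialSums_starC_append_cons_cons hu hv hi (by omega),
    Nat.add_sub_cancel' hin.le, hsum, hlen]

lemma ne_sum_add_one_of_not_mem {α u v : List ℕ} {n : ℕ} (hα : ∀ p ∈ α, 0 < p)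
    (hpeak : ∀ i, i + 1 < α.length → 1 < α.getD i 0) (hw : ∀ p ∈ u ++ n :: v, 0 < p)
    (hsum : (u ++ n :: v).sum = α.sum) {s₀ : ℕ} (hs₀ : s₀ ∈ partialSums α)
    (hs₀Q : s₀ ∉ partialSums (starC (u ++ n :: v))) : s₀ ≠ u.sum + 1 := by
  rintro rfl
  rcases Nat.eq_zero_or_pos u.sum with hu | hu
  · have := add_one_eq_sum_of_mem_partialSums hα hpeak (zero_mem_partialSums α) (hu ▸ hs₀)
    refine hs₀Q (partialSums_subset_partialSums_starC hw ?_)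
    rw [hu, this, ← hsum]
    exact sum_mem_partialSums _
  · refine hs₀Q ?_
    rw [partialSums_starC hw]
    refine Or.inr ⟨u.sum, ⟨?_, hu, ?_⟩, rfl⟩
    · rw [partialSums_append]; exact Or.inl (sum_mem_partialSums u)
    · simp; have := hw n (by simp); omega

lemma sum_range_neg_one_pow_mul_eq_zero {f g : ℕ → ℤ} {n : ℕ}
    (hf : ∀ i ≤ n, f i = g i + g (i + 1)) (h0 : g 0 = 0) (hn : g (n + 1) = 0) :
    ∑ i ∈ Finset.range (n + 1), (-1) ^ i * f i = 0 := by
  have h : ∀ i ∈ Finset.range (n + 1),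
      (-1) ^ i * f i = (-1) ^ i * g i - (-1) ^ (i + 1) * g (i + 1) := by
    intro i hi
    rw [hf i (Nat.lt_succ_iff.1 (Finset.mem_range.1 hi)), pow_succ]
    ring
  rw [Finset.sum_congr rfl h, Finset.sum_range_sub' (fun i => (-1) ^ i * g i), h0, hn]
  simp

lemma append_wd_append_wd_of_pos_of_lt {u v : List ℕ} {i n : ℕ} (hi : 0 < i) (hin : i < n) :
    u ++ wd i ++ wd (n - i) ++ v = u ++ i :: (n - i) :: v := by
  simp [wd, hi.ne', (Nat.sub_pos_of_lt hin).ne']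

lemma append_wd_append_wd_zero {u v : List ℕ} {n : ℕ} (hn : 0 < n) :
    u ++ wd 0 ++ wd (n - 0) ++ v = u ++ n :: v := by
  simp [wd, hn.ne']

lemma append_wd_append_wd_self {u v : List ℕ} {n : ℕ} (hn : 0 < n) :
    u ++ wd n ++ wd (n - n) ++ v = u ++ n :: v := by
  simp [wd, hn.ne']

lemma alternating_sum_θpair_eq_zero_of_sum_ne {α u v : List ℕ} {n : ℕ}
    (hsum : (u ++ n :: v).sum ≠ α.sum) :
    ∑ i ∈ Finset.range (n + 1), (-1) ^ i * θpair α (u ++ wd i ++ wd (n - i) ++ v) = 0 := by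
  refine Finset.sum_eq_zero fun i hi => ?_
  have hi : i ≤ n := Nat.lt_succ_iff.1 (Finset.mem_range.1 hi)
  rw [θpair_eq_zero_of_sum_ne, mul_zero]
  simp only [List.sum_append, List.sum_cons, wd] at hsum ⊢
  split_ifs <;> simp <;> omega

lemma alternating_sum_θpair_eq_zero_of_subset {α u v : List ℕ} {n : ℕ} (hα : ∀ p ∈ α, 0 < p)
    (hu : ∀ p ∈ u, 0 < p) (hv : ∀ p ∈ v, 0 < p) (hn : 0 < n)
    (hsum : (u ++ n :: v).sum = α.sum)
    (hsub : partialSums α ⊆ partialSums (starC (u ++ n :: v))) :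
    ∑ i ∈ Finset.range (n + 1), (-1) ^ i * θpair α (u ++ wd i ++ wd (n - i) ++ v) = 0 := by
  have hw : ∀ p ∈ u ++ n :: v, 0 < p := by
    simp only [List.forall_mem_append, List.forall_mem_cons]; exact ⟨hu, hn, hv⟩
  have hθw : θpair α (u ++ n :: v) = 2 ^ (u.length + v.length + 1) := by
    rw [θpair_eq_ite hα hw, if_pos ⟨hsum, hsub⟩]; simp; ring_nf
  refine sum_range_neg_one_pow_mul_eq_zero
    (g := fun j => if 0 < j ∧ j ≤ n then 2 ^ (u.length + v.length + 1) else 0)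
    (fun i hi => ?_) (by simp) (by simp)
  obtain rfl | rfl | ⟨hi0, hin⟩ : i = 0 ∨ i = n ∨ (0 < i ∧ i < n) := by omega
  · rw [append_wd_append_wd_zero hn, hθw]; simp; omega
  · rw [append_wd_append_wd_self hn, hθw]; simp [hn]
  · rw [append_wd_append_wd_of_pos_of_lt hi0 hin, θpair_append_cons_cons hα hu hv hi0 hin,
      if_pos ⟨hsum, hsub.trans (subset_insert _ _ |>.trans (subset_insert _ _))⟩]
    simp [hi0, hin.le, Nat.succ_le_of_lt hin, pow_succ]; ring

lemma alternating_sum_θpair_eq_zero_of_not_mem {α u v : List ℕ} {n : ℕ} (hα : ∀ p ∈ α, 0 < p)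
    (hpeak : ∀ i, i + 1 < α.length → 1 < α.getD i 0)
    (hu : ∀ p ∈ u, 0 < p) (hv : ∀ p ∈ v, 0 < p) (hn : 0 < n)
    (hsum : (u ++ n :: v).sum = α.sum) {s₀ : ℕ} (hs₀ : s₀ ∈ partialSums α)
    (hs₀Q : s₀ ∉ partialSums (starC (u ++ n :: v))) :
    ∑ i ∈ Finset.range (n + 1), (-1) ^ i * θpair α (u ++ wd i ++ wd (n - i) ++ v) = 0 := by
  set Q := partialSums (starC (u ++ n :: v))
  have hw : ∀ p ∈ u ++ n :: v, 0 < p := by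
    simp only [List.forall_mem_append, List.forall_mem_cons]; exact ⟨hu, hn, hv⟩
  have hθw : θpair α (u ++ n :: v) = 0 := by
    rw [θpair_eq_ite hα hw, if_neg fun h => hs₀Q (h.2 hs₀)]
  have hsumQ : α.sum ∈ Q := hsum ▸ partialSums_subset_partialSums_starC hw (sum_mem_partialSums _)
  have hs₀n : s₀ ≠ u.sum + n := by
    rintro rfl
    refine hs₀Q (partialSums_subset_partialSums_starC hw ?_)
    rw [partialSums_append, partialSums_cons]
    exact Or.inr ⟨n, Or.inr ⟨0, zero_mem_partialSums v, rfl⟩, rfl⟩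
  have hs₀1 := ne_sum_add_one_of_not_mem hα hpeak hw hsum hs₀ hs₀Q
  refine sum_range_neg_one_pow_mul_eq_zero
    (g := fun j => if 0 < j ∧ j < n ∧ s₀ = u.sum + j ∧ partialSums α ⊆ insert s₀ Q
      then 2 ^ (u.length + v.length + 2) else 0)
    (fun i hi => ?_) (by simp) (by simp)
  obtain rfl | rfl | ⟨hi0, hin⟩ : i = 0 ∨ i = n ∨ (0 < i ∧ i < n) := by omega
  · rw [append_wd_append_wd_zero hn, hθw]; simp; omega
  · rw [append_wd_append_wd_self hn, hθw]; simp
  · rw [append_wd_append_wd_of_pos_of_lt hi0 hin, θpair_append_cons_cons hα hu hv hi0 hin,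
      partialSums_subset_insert_insert_iff hα hpeak hs₀ hs₀Q hsumQ]
    by_cases hR : partialSums α ⊆ insert s₀ Q
    · simp only [hsum, hR, true_and, and_true]
      split_ifs <;> omega
    · simp [hR]

/-- Every peak function `θ_α` annihilates the ideal `⟨X_{2m} : m ≥ 1⟩` of `NC`:
`θ_α(S^β X_{2m} S^γ) = 0` for all compositions `β, γ` and all `m ≥ 1`, where
`S^β X_{2m} S^γ = ∑_{i=0}^{2m} (−1)^i S^{β·i·(2m−i)·γ}` (parts `0` being omitted). -/
theorem stmt16 (α : List ℕ) (hαp : ∀ p ∈ α, 0 < p)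
    (hpeak : ∀ i, i + 1 < α.length → 1 < α.getD i 0)
    (β γ : List ℕ) (hβ : ∀ p ∈ β, 0 < p) (hγ : ∀ p ∈ γ, 0 < p)
    (m : ℕ) (hm : 1 ≤ m) :
    ∑ i ∈ Finset.range (2 * m + 1),
      (-1 : ℤ) ^ i * θpair α (β ++ wd i ++ wd (2 * m - i) ++ γ) = 0 := by
  have hn : 0 < 2 * m := by omega
  by_cases hsum : (β ++ 2 * m :: γ).sum = α.sum
  · by_cases hsub : partialSums α ⊆ partialSums (starC (β ++ 2 * m :: γ))
    · exact alternating_sum_θpair_eq_zero_of_subset hαp hβ hγ hn hsum hsub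
    · obtain ⟨s₀, hs₀, hs₀Q⟩ := not_subset.1 hsub
      exact alternating_sum_θpair_eq_zero_of_not_mem hαp hpeak hβ hγ hn hsum hs₀ hs₀Q
  · exact alternating_sum_θpair_eq_zero_of_sum_ne hsum

end
end

section
/- The element X_2 = 2h_2 − h_1h_1 is annihilated by every shifted quasi-symmetric function θ_α (α any composition with α_1 > 1 if |α| > 1), under the pairing M_α(S^β) = δ_{αβ}. -/
/-!
Refining a composition preserves its size and, when all parts are positive, positivity of the
parts. Both `[2]` and `[1, 1]` (which are their own `β*`) have size 2, so `θ_α` can pair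
nontrivially with them only if `α` is a composition of 2 with first part > 1, i.e. `α = [2]`.
There `θ_{(2)}(X_2) = 2 · 2¹ − 2² = 0`.
-/

open scoped Classical

noncomputable section

namespace RefinesL

variable {fine coarse : List ℕ}

theorem sum_eq_s17 (h : RefinesL fine coarse) : coarse.sum = fine.sum := by
  obtain ⟨L, -, rfl, rfl⟩ := h
  exact List.sum_flatten.symm

theorem pos_of_mem (h : RefinesL fine coarse) (hpos : ∀ p ∈ fine, 0 < p) :
    ∀ p ∈ coarse, 0 < p := by
  obtain ⟨L, hne, rfl, rfl⟩ := h
  intro p hp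
  obtain ⟨l, hlL, rfl⟩ := List.mem_map.mp hp
  obtain ⟨x, hx⟩ := List.exists_mem_of_ne_nil l (fun hl => hne (hl ▸ hlL))
  exact (hpos x (List.mem_flatten.mpr ⟨l, hlL, hx⟩)).trans_le (List.le_sum_of_mem hx)

end RefinesL

theorem List.eq_singleton_of_forall_pos_of_sum_le_headI {α : List ℕ} (hpos : ∀ p ∈ α, 0 < p)
    (hα : α ≠ []) (hsum : α.sum ≤ α.headI) : α = [α.sum] := by
  obtain _ | ⟨a, t⟩ := α
  · exact absurd rfl hα
  have ht : t = [] := by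
    have hzero : t.sum = 0 := by simp only [List.sum_cons, List.headI_cons] at hsum; omega
    exact List.eq_nil_iff_forall_not_mem.mpr fun x hx =>
      (hpos x (List.mem_cons_of_mem a hx)).ne' (List.sum_eq_zero_iff.mp hzero x hx)
  simp [ht]

theorem eq_two_of_refinesL {fine α : List ℕ} (h : RefinesL fine α) (hpos : ∀ p ∈ fine, 0 < p)
    (hsum : fine.sum = 2) (hα1 : 1 < α.sum → 1 < α.headI) : α = [2] := by
  have hαsum : α.sum = 2 := h.sum_eq_s17.trans hsum
  have hα : α ≠ [] := fun hnil => by simp [hnil] at hαsum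
  have hhead : α.sum ≤ α.headI := by have := hα1 (by omega); omega
  rw [List.eq_singleton_of_forall_pos_of_sum_le_headI (h.pos_of_mem hpos) hα hhead, hαsum]

theorem stmt17_general (α : List ℕ)
    (hα1 : 1 < α.sum → 1 < α.headI) :
    2 * θpair α [2] - θpair α [1, 1] = 0 := by
  have hstar₂ : starC [2] = [2] := rfl
  have hstar₁₁ : starC [1, 1] = [1, 1] := rfl
  by_cases hα : α = [2]
  · subst hα
    have h₂ : RefinesL [2] [2] := ⟨[[2]], by simp, rfl, rfl⟩
    have h₁₁ : RefinesL [1, 1] [2] := ⟨[[1, 1]], by simp, rfl, rfl⟩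
    simp [θpair, hstar₂, hstar₁₁, h₂, h₁₁]
  · have h₂ : ¬ RefinesL [2] α := fun h => hα (eq_two_of_refinesL h (by simp) rfl hα1)
    have h₁₁ : ¬ RefinesL [1, 1] α := fun h => hα (eq_two_of_refinesL h (by simp) rfl hα1)
    simp [θpair, hstar₂, hstar₁₁, h₂, h₁₁]

/-- The element `X_2 = 2h_2 − h_1h_1` is annihilated by every shifted quasi-symmetric
function `θ_α` (`α` any composition with `α_1 > 1` if `|α| > 1`):
`θ_α(X_2) = 2 θ_α(S^{(2)}) − θ_α(S^{(1,1)}) = 0`. -/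
theorem stmt17 (α : List ℕ) (hαp : ∀ p ∈ α, 0 < p)
    (hα1 : 1 < α.sum → 1 < α.headI) :
    2 * θpair α [2] - θpair α [1, 1] = 0 :=
  stmt17_general α hα1

end
end
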